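/- arXiv:2501.07023 — 2 statements merged into one kernel-verified Lean document; each statement's English description precedes it below -/
import Mathlib

section
/- Let T be a tree of sequences. Call a probability tree p on T positive if p t k > 0 for every non-maximal t ∈ T and every k ∈ ℕ with t ++ [k] ∈ T, and call an inductive probability measure ξ on T positive if ξ(t) > 0 for all t ∈ T. Then: (i) if p is a positive probability tree on T, then Ξ_p is a positive inductive probability measure on T; (ii) if p and q are positive probability trees on T with Ξ_p(t) = Ξ_q(t) for all t ∈ T, then p t k = q t k for every non-maximal t ∈ T and every k with t ++ [k] ∈ T; (iii) for every positive inductive probability measure ξ on T there exists a positive probability tree p on T with Ξ_p(t) = ξ(t) for all t ∈ T. -/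
open scoped ENNReal
open MeasureTheory

noncomputable section

/-- A tree of sequences: a nonempty set of finite lists of naturals closed under prefixes. -/
def IsTree (T : Set (List ℕ)) : Prop :=
  T.Nonempty ∧ ∀ s t : List ℕ, s <+: t → t ∈ T → s ∈ T

/-- `t` is a maximal node of `T`: it has no successor in `T`. -/
def IsMaxNode (T : Set (List ℕ)) (t : List ℕ) : Prop :=
  ∀ k : ℕ, t ++ [k] ∉ T

/-- A probability tree on `T`. -/
def IsProbTree (T : Set (List ℕ)) (p : List ℕ → ℕ → ℝ≥0∞) : Prop :=
  ∀ t ∈ T, ¬ IsMaxNode T t →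
    (∀ k : ℕ, t ++ [k] ∉ T → p t k = 0) ∧ (∑' k : ℕ, p t k = 1)

/-- The measure induced by a probability tree: `Ξ_p(t) = ∏_{i<|t|} p (t↾i) (t i)`. -/
def Xi (p : List ℕ → ℕ → ℝ≥0∞) (t : List ℕ) : ℝ≥0∞ :=
  ∏ i ∈ Finset.range t.length, p (t.take i) (t.getD i 0)

/-- An inductive probability measure on `T`. -/
def IsIPM (T : Set (List ℕ)) (ξ : List ℕ → ℝ≥0∞) : Prop :=
  ξ [] = 1 ∧ ∀ t ∈ T, ¬ IsMaxNode T t →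
    ξ t = ∑' k : {k : ℕ // t ++ [k] ∈ T}, ξ (t ++ [k.1])

/-- The set of infinite branches of `T`. -/
def limT (T : Set (List ℕ)) : Set (ℕ → ℕ) :=
  {x | ∀ n : ℕ, (List.range n).map x ∈ T}

/-- `T` is pruned: every node has a successor in `T`. -/
def Pruned (T : Set (List ℕ)) : Prop := ∀ t ∈ T, ∃ k : ℕ, t ++ [k] ∈ T

/-- The basic clopen set `[t]` of branches through `t`. -/
def cyl (T : Set (List ℕ)) (t : List ℕ) : Set ↥(limT T) :=
  {x | (List.range t.length).map x.1 = t}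

/-- A positive probability tree on `T`. -/
def PosProbTree (T : Set (List ℕ)) (p : List ℕ → ℕ → ℝ≥0∞) : Prop :=
  IsProbTree T p ∧ ∀ t ∈ T, ¬ IsMaxNode T t → ∀ k : ℕ, t ++ [k] ∈ T → 0 < p t k

/-- A positive inductive probability measure on `T`. -/
def PosIPM (T : Set (List ℕ)) (ξ : List ℕ → ℝ≥0∞) : Prop :=
  IsIPM T ξ ∧ ∀ t ∈ T, 0 < ξ t

/-!
The identity `Ξ_p (t ++ [k]) = Ξ_p t * p t k` drives all three parts. Summed over `k` it gives
the inductive equation (i). Since `Ξ_p t` is positive and at most `1`, it can be cancelled,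
which gives (ii). For (iii) take the conditional probabilities `p t k = ξ (t ++ [k]) / ξ t`.
-/

namespace IsTree

variable {T : Set (List ℕ)}

lemma mem_of_append_mem (hT : IsTree T) {t : List ℕ} {k : ℕ} (h : t ++ [k] ∈ T) : t ∈ T :=
  hT.2 t (t ++ [k]) (List.prefix_append t [k]) h

end IsTree

lemma not_isMaxNode_of_append_mem {T : Set (List ℕ)} {t : List ℕ} {k : ℕ} (h : t ++ [k] ∈ T) :
    ¬ IsMaxNode T t :=
  fun hmax => hmax k h

lemma tsum_succ_eq_tsum {T : Set (List ℕ)} {t : List ℕ} {f : ℕ → ℝ≥0∞}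
    (hf : ∀ k, t ++ [k] ∉ T → f k = 0) :
    ∑' k : {k : ℕ // t ++ [k] ∈ T}, f k = ∑' k, f k :=
  tsum_subtype_eq_of_support_subset fun k hk => by_contra fun hkT => hk (hf k hkT)

section Xi

variable (p : List ℕ → ℕ → ℝ≥0∞)

@[simp]
lemma Xi_nil : Xi p [] = 1 := by simp [Xi]

lemma Xi_append (t : List ℕ) (k : ℕ) : Xi p (t ++ [k]) = Xi p t * p t k := by
  unfold Xi
  rw [List.length_append, List.length_singleton, Finset.prod_range_succ]
  congr 1
  · refine Finset.prod_congr rfl fun i hi => ?_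
    have hi : i < t.length := Finset.mem_range.mp hi
    rw [List.take_append_of_le_length hi.le, List.getD_append _ _ _ _ hi]
  · simp

variable {p}

lemma isIPM_Xi {T : Set (List ℕ)} (hp : IsProbTree T p) : IsIPM T (Xi p) := by
  refine ⟨Xi_nil p, fun t ht hnm => ?_⟩
  obtain ⟨hzero, hsum⟩ := hp t ht hnm
  rw [tsum_succ_eq_tsum (f := fun k => Xi p (t ++ [k]))
    fun k hk => by rw [Xi_append, hzero k hk, mul_zero]]
  simp only [Xi_append, ENNReal.tsum_mul_left, hsum, mul_one]

lemma Xi_pos {T : Set (List ℕ)} (hT : IsTree T) (hp : PosProbTree T p) :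
    ∀ t ∈ T, 0 < Xi p t := by
  intro t
  induction t using List.reverseRecOn with
  | nil => simp
  | append_singleton s k ih =>
    intro hsk
    have hs := hT.mem_of_append_mem hsk
    rw [Xi_append]
    exact ENNReal.mul_pos (ih hs).ne' (hp.2 s hs (not_isMaxNode_of_append_mem hsk) k hsk).ne'

end Xi

namespace IsIPM

variable {T : Set (List ℕ)} {ξ : List ℕ → ℝ≥0∞}

lemma le_one (hT : IsTree T) (hξ : IsIPM T ξ) : ∀ t ∈ T, ξ t ≤ 1 := by
  intro t
  induction t using List.reverseRecOn with
  | nil => simp [hξ.1]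
  | append_singleton s k ih =>
    intro hsk
    have hs := hT.mem_of_append_mem hsk
    calc ξ (s ++ [k]) ≤ ∑' j : {j : ℕ // s ++ [j] ∈ T}, ξ (s ++ [j.1]) :=
          ENNReal.le_tsum (⟨k, hsk⟩ : {j : ℕ // s ++ [j] ∈ T})
      _ = ξ s := (hξ.2 s hs (not_isMaxNode_of_append_mem hsk)).symm
      _ ≤ 1 := ih hs

lemma ne_top (hT : IsTree T) (hξ : IsIPM T ξ) {t : List ℕ} (ht : t ∈ T) : ξ t ≠ ∞ :=
  ((hξ.le_one hT t ht).trans_lt ENNReal.one_lt_top).ne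

end IsIPM

lemma PosProbTree.eq_of_Xi_eq {T : Set (List ℕ)} (hT : IsTree T) {p q : List ℕ → ℕ → ℝ≥0∞}
    (hp : PosProbTree T p) (hpq : ∀ t ∈ T, Xi p t = Xi q t) {t : List ℕ} (ht : t ∈ T) {k : ℕ}
    (hk : t ++ [k] ∈ T) : p t k = q t k := by
  have h := hpq _ hk
  rw [Xi_append, Xi_append, ← hpq t ht] at h
  exact (ENNReal.mul_right_inj (Xi_pos hT hp t ht).ne' ((isIPM_Xi hp.1).ne_top hT ht)).mp h

open Classical in
def condProb (T : Set (List ℕ)) (ξ : List ℕ → ℝ≥0∞) (t : List ℕ) (k : ℕ) : ℝ≥0∞ :=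
  if t ++ [k] ∈ T then ξ (t ++ [k]) / ξ t else 0

namespace PosIPM

variable {T : Set (List ℕ)} {ξ : List ℕ → ℝ≥0∞}

lemma Xi_condProb (hT : IsTree T) (hξ : PosIPM T ξ) : ∀ t ∈ T, Xi (condProb T ξ) t = ξ t := by
  intro t
  induction t using List.reverseRecOn with
  | nil => simp [hξ.1.1]
  | append_singleton s k ih =>
    intro hsk
    have hs := hT.mem_of_append_mem hsk
    rw [Xi_append, ih hs, condProb, if_pos hsk]
    exact ENNReal.mul_div_cancel (hξ.2 s hs).ne' (hξ.1.ne_top hT hs)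

lemma posProbTree_condProb (hT : IsTree T) (hξ : PosIPM T ξ) : PosProbTree T (condProb T ξ) := by
  have hzero : ∀ t k, t ++ [k] ∉ T → condProb T ξ t k = 0 := fun t k hk => if_neg hk
  refine ⟨fun t ht hnm => ⟨hzero t, ?_⟩, fun t ht _ k hk => ?_⟩
  · rw [← tsum_succ_eq_tsum (hzero t)]
    calc ∑' k : {k : ℕ // t ++ [k] ∈ T}, condProb T ξ t k
        = ∑' k : {k : ℕ // t ++ [k] ∈ T}, ξ (t ++ [k.1]) * (ξ t)⁻¹ := by
          refine tsum_congr fun k => ?_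
          rw [condProb, if_pos k.2, div_eq_mul_inv]
      _ = 1 := by
          rw [ENNReal.tsum_mul_right, ← hξ.1.2 t ht hnm,
            ENNReal.mul_inv_cancel (hξ.2 t ht).ne' (hξ.1.ne_top hT ht)]
  · rw [condProb, if_pos hk]
    exact ENNReal.div_pos (hξ.2 _ hk).ne' (hξ.1.ne_top hT ht)

end PosIPM

theorem stmt5 (T : Set (List ℕ)) (hT : IsTree T) :
    (∀ p : List ℕ → ℕ → ℝ≥0∞, PosProbTree T p → PosIPM T (Xi p)) ∧
    (∀ p q : List ℕ → ℕ → ℝ≥0∞, PosProbTree T p → PosProbTree T q →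
      (∀ t ∈ T, Xi p t = Xi q t) →
      ∀ t ∈ T, ¬ IsMaxNode T t → ∀ k : ℕ, t ++ [k] ∈ T → p t k = q t k) ∧
    (∀ ξ : List ℕ → ℝ≥0∞, PosIPM T ξ →
      ∃ p : List ℕ → ℕ → ℝ≥0∞, PosProbTree T p ∧ ∀ t ∈ T, Xi p t = ξ t) :=
  ⟨fun _ hp => ⟨isIPM_Xi hp.1, Xi_pos hT hp⟩,
    fun _ _ hp _ hpq _ ht _ _ hk => hp.eq_of_Xi_eq hT hpq ht hk,
    fun _ hξ => ⟨condProb T _, hξ.posProbTree_condProb hT, hξ.Xi_condProb hT⟩⟩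
end
end

section
/- Let T be a pruned tree of sequences and ξ an inductive probability measure on T that is free, i.e. ⨅_{n ∈ ℕ} ξ(x↾n) = 0 for every x ∈ lim T. Then T⁺ := {t ∈ T : ξ(t) > 0} is a perfect tree: T⁺ is nonempty, closed under prefixes, and for every t ∈ T⁺ there exists s ∈ T⁺ with t a prefix of s such that s has at least two successors in T⁺. -/
/-!
Positive nodes are closed under prefixes because `ξ` decreases along `T`. For splitting, suppose
no extension of a positive node `t` has two positive children. By the inductive equation every
such extension `s` then has a child carrying all of `ξ s` (pruning provides a child when all
children are null). Following these children from `t` yields a branch along which `ξ` stays equal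
to `ξ t > 0`, contradicting freeness.
-/

open scoped ENNReal
open MeasureTheory

noncomputable section

/-- `ξ` is free: all branches have measure (infimum) zero. -/
def FreeIPM (T : Set (List ℕ)) (ξ : List ℕ → ℝ≥0∞) : Prop :=
  ∀ x ∈ limT T, (⨅ n : ℕ, ξ ((List.range n).map x)) = 0

namespace List

theorem range_prefix_range_of_le {m n : ℕ} (h : m ≤ n) : range m <+: range n := by
  obtain ⟨k, rfl⟩ := Nat.exists_eq_add_of_le h
  rw [range_add]
  exact prefix_append _ _

theorem exists_map_range_add_eq_append {α : Type*} (t : List α) (x : ℕ → α) :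
    ∃ y : ℕ → α, ∀ n, (range (t.length + n)).map y = t ++ (range n).map x := by
  refine ⟨fun i => if h : i < t.length then t[i] else x (i - t.length), fun n => ?_⟩
  rw [range_add, map_append, map_map]
  congr 1
  · exact ext_getElem (by simp) (by simp +contextual)
  · exact map_congr_left (by simp)

end List

theorem exists_append_map_range_of_forall_exists_child {P : List ℕ → Prop} {t : List ℕ}
    (ht : P t) (hchild : ∀ s, P s → ∃ k, P (s ++ [k])) :
    ∃ x : ℕ → ℕ, ∀ n, P (t ++ (List.range n).map x) := by
  choose c hc using fun s : {s // P s} => hchild s.1 s.2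
  let g : ℕ → {s // P s} := fun n => (fun s => ⟨s.1 ++ [c s], hc s⟩)^[n] ⟨t, ht⟩
  have hg : ∀ n, (g (n + 1)).1 = (g n).1 ++ [c (g n)] := fun n =>
    congrArg Subtype.val (Function.iterate_succ_apply' _ _ _)
  refine ⟨c ∘ g, fun n => ?_⟩
  suffices (g n).1 = t ++ (List.range n).map (c ∘ g) from this ▸ (g n).2
  induction n with
  | zero => simp [g]
  | succ n ih => rw [hg, ih, List.range_succ, List.map_append, List.append_assoc]; rfl

namespace IsIPM

variable {T : Set (List ℕ)} {ξ : List ℕ → ℝ≥0∞}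

theorem apply_append_singleton_le (hξ : IsIPM T ξ) {s : List ℕ} (hs : s ∈ T) {k : ℕ}
    (hk : s ++ [k] ∈ T) : ξ (s ++ [k]) ≤ ξ s := by
  rw [hξ.2 s hs fun h => h k hk]
  exact ENNReal.le_tsum (⟨k, hk⟩ : {j // s ++ [j] ∈ T})

theorem antitone_of_prefix (hξ : IsIPM T ξ) (hT : IsTree T) {s t : List ℕ} (hst : s <+: t)
    (ht : t ∈ T) : ξ t ≤ ξ s := by
  obtain ⟨r, rfl⟩ := hst
  induction r using List.reverseRecOn with
  | nil => simp
  | append_singleton r k ih =>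
    rw [← List.append_assoc] at ht ⊢
    exact (hξ.apply_append_singleton_le (hT.2 _ _ (List.prefix_append _ _) ht) ht).trans
      (ih (hT.2 _ _ (List.prefix_append _ _) ht))

theorem exists_child_eq_of_pos_children_eq (hξ : IsIPM T ξ) {s : List ℕ} (hs : s ∈ T)
    (hnm : ¬ IsMaxNode T s)
    (huniq : ∀ k₁ k₂, s ++ [k₁] ∈ T → 0 < ξ (s ++ [k₁]) → s ++ [k₂] ∈ T → 0 < ξ (s ++ [k₂]) →
      k₁ = k₂) :
    ∃ k, s ++ [k] ∈ T ∧ ξ (s ++ [k]) = ξ s := by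
  by_cases hpos : ∃ k, s ++ [k] ∈ T ∧ 0 < ξ (s ++ [k])
  · obtain ⟨k, hk, hkpos⟩ := hpos
    refine ⟨k, hk, ?_⟩
    rw [hξ.2 s hs hnm, tsum_eq_single (⟨k, hk⟩ : {j // s ++ [j] ∈ T})]
    rintro ⟨j, hj⟩ hjk
    by_contra hj0
    exact hjk (Subtype.ext (huniq j k hj (pos_iff_ne_zero.2 hj0) hk hkpos))
  · push Not at hpos
    have hzero : ξ s = 0 := by
      rw [hξ.2 s hs hnm]
      exact ENNReal.tsum_eq_zero.2 fun k => nonpos_iff_eq_zero.1 (hpos k.1 k.2)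
    obtain ⟨k, hk⟩ := not_forall_not.1 hnm
    exact ⟨k, hk, by rw [hzero]; exact nonpos_iff_eq_zero.1 (hpos k hk)⟩

end IsIPM

theorem IsTree.nil_mem {T : Set (List ℕ)} (hT : IsTree T) : [] ∈ T :=
  let ⟨u, hu⟩ := hT.1
  hT.2 [] u u.nil_prefix hu

theorem exists_splitting_extension {T : Set (List ℕ)} {ξ : List ℕ → ℝ≥0∞} (hT : IsTree T)
    (hpr : Pruned T) (hξ : IsIPM T ξ) (hfree : FreeIPM T ξ) {t : List ℕ} (ht : t ∈ T)
    (htpos : 0 < ξ t) :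
    ∃ s : List ℕ, (s ∈ T ∧ 0 < ξ s) ∧ t <+: s ∧
      ∃ k₁ k₂ : ℕ, k₁ ≠ k₂ ∧
        (s ++ [k₁] ∈ T ∧ 0 < ξ (s ++ [k₁])) ∧ (s ++ [k₂] ∈ T ∧ 0 < ξ (s ++ [k₂])) := by
  by_contra hsplit
  have hchild : ∀ s, t <+: s ∧ s ∈ T ∧ ξ s = ξ t →
      ∃ k, t <+: s ++ [k] ∧ s ++ [k] ∈ T ∧ ξ (s ++ [k]) = ξ t := by
    rintro s ⟨hts, hs, hξs⟩
    have hnm : ¬ IsMaxNode T s := fun h => let ⟨k, hk⟩ := hpr s hs; h k hk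
    obtain ⟨k, hk, hk_eq⟩ := hξ.exists_child_eq_of_pos_children_eq hs hnm
      fun k₁ k₂ h₁ p₁ h₂ p₂ => by_contra fun hne =>
        hsplit ⟨s, ⟨hs, hξs ▸ htpos⟩, hts, k₁, k₂, hne, ⟨h₁, p₁⟩, ⟨h₂, p₂⟩⟩
    exact ⟨k, hts.trans (List.prefix_append _ _), hk, hk_eq.trans hξs⟩
  obtain ⟨x, hx⟩ :=
    exists_append_map_range_of_forall_exists_child ⟨List.prefix_refl t, ht, rfl⟩ hchild
  obtain ⟨y, hy⟩ := List.exists_map_range_add_eq_append t x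
  have hseg : ∀ n, (List.range n).map y <+: t ++ (List.range n).map x := fun n =>
    hy n ▸ (List.range_prefix_range_of_le (Nat.le_add_left n t.length)).map y
  have hy_lim : y ∈ limT T := fun n => hT.2 _ _ (hseg n) (hx n).2.1
  have hle : ξ t ≤ ⨅ n, ξ ((List.range n).map y) := le_iInf fun n =>
    (hx n).2.2 ▸ hξ.antitone_of_prefix hT (hseg n) (hx n).2.1
  rw [hfree y hy_lim] at hle
  exact htpos.ne' (nonpos_iff_eq_zero.1 hle)

theorem stmt13 (T : Set (List ℕ)) (ξ : List ℕ → ℝ≥0∞)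
    (hT : IsTree T) (hpr : Pruned T) (hξ : IsIPM T ξ) (hfree : FreeIPM T ξ) :
    ({t | t ∈ T ∧ 0 < ξ t}.Nonempty) ∧
    (∀ s t : List ℕ, s <+: t → (t ∈ T ∧ 0 < ξ t) → (s ∈ T ∧ 0 < ξ s)) ∧
    (∀ t : List ℕ, (t ∈ T ∧ 0 < ξ t) →
      ∃ s : List ℕ, (s ∈ T ∧ 0 < ξ s) ∧ t <+: s ∧
        ∃ k₁ k₂ : ℕ, k₁ ≠ k₂ ∧
          (s ++ [k₁] ∈ T ∧ 0 < ξ (s ++ [k₁])) ∧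
          (s ++ [k₂] ∈ T ∧ 0 < ξ (s ++ [k₂]))) :=
  ⟨⟨[], hT.nil_mem, by simp [hξ.1]⟩,
    fun _ _ hst ⟨ht, hpos⟩ => ⟨hT.2 _ _ hst ht, hpos.trans_le (hξ.antitone_of_prefix hT hst ht)⟩,
    fun _ ⟨ht, hpos⟩ => exists_splitting_extension hT hpr hξ hfree ht hpos⟩
end
end
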